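/- arXiv:2004.14346 — 4 statements merged into one kernel-verified Lean document; each statement's English description precedes it below -/
import Mathlib

section
/- Let (X, Σ, μ) be a finite measure space, (E, ‖·‖_E) a Banach space, and let L(X; E) denote the complete metric space of (equivalence classes of) E-valued measurable functions with the topology of convergence in measure μ. Then for any continuous function φ : [S,T] → L(X;E) (with 0 ≤ S < T < ∞), there exists a jointly measurable function φ̃ : [S,T] × X → E such that for every t ∈ [S,T], φ(t)(x) = φ̃(t,x) in E for μ-a.e. x ∈ X. -/
open MeasureTheory Filter Set
open scoped Topology ENNReal

/-!
Continuity in measure on the compact interval `[S, T]` is uniform, so for each `k` there is a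
mesh `η k` such that, uniformly in `t`, `φ (τ k t)` is `2⁻ᵏ`-close to `φ t` outside a set of
measure at most `2⁻ᵏ`, where `τ k t` is the grid point of mesh `η k` just below `t`. Since
`τ k` takes only countably many values, `(t, x) ↦ φ (τ k t) x` is jointly measurable once each
`φ s` is replaced by a strongly measurable version; by Borel–Cantelli these functions converge
to `φ t x` for a.e. `x`, for every fixed `t`, so their pointwise limit (where it exists) is the
required jointly measurable version.
-/

section

variable {X E : Type*} [MeasurableSpace X] {μ : Measure X}

theorem measure_setOf_le_dist_le_add [PseudoMetricSpace E] (f g h : X → E) (ε : ℝ) :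
    μ {x | ε ≤ dist (f x) (g x)} ≤
      μ {x | ε / 2 ≤ dist (f x) (h x)} + μ {x | ε / 2 ≤ dist (g x) (h x)} := by
  refine (measure_mono fun x hx => ?_).trans (measure_union_le _ _)
  by_contra hx'
  simp only [mem_union, mem_ofPred_eq, not_or, not_le] at hx hx'
  linarith [dist_triangle_right (f x) (g x) (h x)]

theorem IsCompact.exists_forall_dist_lt_measure_le {α : Type*} [PseudoMetricSpace α] {K : Set α}
    (hK : IsCompact K) [PseudoMetricSpace E] {φ : α → X → E}
    (hφ : ∀ t₀ ∈ K, ∀ u : ℕ → α, (∀ n, u n ∈ K) → Tendsto u atTop (𝓝 t₀) →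
      TendstoInMeasure μ (fun n => φ (u n)) atTop (φ t₀))
    {ε : ℝ} (hε : 0 < ε) {δ : ℝ≥0∞} (hδ : 0 < δ) :
    ∃ η > 0, ∀ s ∈ K, ∀ t ∈ K, dist s t < η → μ {x | ε ≤ dist (φ s x) (φ t x)} ≤ δ := by
  by_contra! h
  choose s hs t ht hst hμ using fun n : ℕ => h (1 / (n + 1)) Nat.one_div_pos_of_nat
  obtain ⟨t₀, ht₀, κ, hκ, htκ⟩ := hK.tendsto_subseq ht
  have hsκ : Tendsto (s ∘ κ) atTop (𝓝 t₀) := by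
    refine htκ.congr_dist (squeeze_zero (fun _ => dist_nonneg) (fun j => ?_)
      (tendsto_one_div_add_atTop_nhds_zero_nat.comp hκ.tendsto_atTop))
    exact (dist_comm (s (κ j)) (t (κ j)) ▸ hst (κ j)).le
  have hs_lim := tendstoInMeasure_iff_dist.1 (hφ t₀ ht₀ _ (fun j => hs (κ j)) hsκ) _ (half_pos hε)
  have ht_lim := tendstoInMeasure_iff_dist.1 (hφ t₀ ht₀ _ (fun j => ht (κ j)) htκ) _ (half_pos hε)
  have hμ_lim : Tendsto (fun j => μ {x | ε ≤ dist (φ (s (κ j)) x) (φ (t (κ j)) x)}) atTop (𝓝 0) :=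
    tendsto_of_tendsto_of_tendsto_of_le_of_le tendsto_const_nhds (by simpa using hs_lim.add ht_lim)
      (fun _ => zero_le) (fun j => measure_setOf_le_dist_le_add _ _ (φ t₀) ε)
  obtain ⟨j, hj⟩ := (hμ_lim.eventually (gt_mem_nhds hδ)).exists
  exact (hμ (κ j)).not_gt hj

theorem ae_tendsto_of_measure_le_inv_two_pow [PseudoMetricSpace E] {f : ℕ → X → E} {g : X → E}
    (h : ∀ k, μ {x | (2⁻¹ : ℝ) ^ k ≤ dist (f k x) (g x)} ≤ 2⁻¹ ^ k) :
    ∀ᵐ x ∂μ, Tendsto (fun k => f k x) atTop (𝓝 (g x)) := by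
  have hsum : ∑' k, μ {x | (2⁻¹ : ℝ) ^ k ≤ dist (f k x) (g x)} ≠ ∞ := by
    refine ne_top_of_le_ne_top ?_ (ENNReal.tsum_le_tsum h)
    simp [ENNReal.tsum_geometric, ENNReal.one_sub_inv_two]
  filter_upwards [ae_eventually_notMem hsum] with x hx
  refine tendsto_iff_dist_tendsto_zero.2 (squeeze_zero' (.of_forall fun _ => dist_nonneg) ?_
    (tendsto_pow_atTop_nhds_zero_of_lt_one (r := (2⁻¹ : ℝ)) (by norm_num) (by norm_num)))
  filter_upwards [hx] with k hk
  exact (not_le.1 hk).le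

theorem stronglyMeasurable_prod_of_nat_index {α : Type*} [MeasurableSpace α] [TopologicalSpace E]
    [TopologicalSpace.PseudoMetrizableSpace E] {q : α → ℕ} (hq : Measurable q)
    {G : ℕ → X → E} (hG : ∀ j, StronglyMeasurable (G j)) :
    StronglyMeasurable fun p : α × X => G (q p.1) p.2 := by
  borelize E
  refine stronglyMeasurable_iff_measurable_separable.2 ⟨?_, ?_⟩
  · have hGm : Measurable fun r : X × ℕ => G r.2 r.1 :=
      measurable_from_prod_countable_left fun j => (hG j).measurable
    exact hGm.comp (measurable_snd.prodMk (hq.comp measurable_fst))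
  · refine (TopologicalSpace.IsSeparable.iUnion fun j => (hG j).isSeparable_range).mono ?_
    rintro _ ⟨p, rfl⟩
    exact mem_iUnion.2 ⟨q p.1, p.2, rfl⟩

end

theorem floor_grid_mem_Icc_dist_lt {S T h t : ℝ} (hh : 0 < h) (ht : t ∈ Icc S T) :
    S + ⌊(t - S) / h⌋₊ * h ∈ Icc S T ∧ dist (S + ⌊(t - S) / h⌋₊ * h) t < h := by
  have h₀ : 0 ≤ (t - S) / h := div_nonneg (sub_nonneg.2 ht.1) hh.le
  have hle : (⌊(t - S) / h⌋₊ : ℝ) * h ≤ t - S := (le_div_iff₀ hh).1 (Nat.floor_le h₀)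
  have hlt : t - S < (⌊(t - S) / h⌋₊ + 1) * h := (div_lt_iff₀ hh).1 (Nat.lt_floor_add_one _)
  have hnn : 0 ≤ (⌊(t - S) / h⌋₊ : ℝ) * h := by positivity
  refine ⟨⟨by linarith, by linarith [ht.2]⟩, ?_⟩
  rw [Real.dist_eq, abs_sub_lt_iff]
  constructor <;> linarith

theorem stmt2_general {X : Type*} [MeasurableSpace X] (μ : Measure X)
    {E : Type*} [NormedAddCommGroup E] [CompleteSpace E]
    (S T : ℝ)
    (φ : ℝ → X → E)
    (hmeas : ∀ t, AEStronglyMeasurable (φ t) μ)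
    (hcont : ∀ t₀ ∈ Icc S T, ∀ u : ℕ → ℝ, (∀ n, u n ∈ Icc S T) →
      Tendsto u atTop (𝓝 t₀) →
      TendstoInMeasure μ (fun n => φ (u n)) atTop (φ t₀)) :
    ∃ φ' : ℝ × X → E, StronglyMeasurable φ' ∧
      ∀ t ∈ Icc S T, ∀ᵐ x ∂μ, φ t x = φ' (t, x) := by
  choose η hη hημ using fun k : ℕ => isCompact_Icc.exists_forall_dist_lt_measure_le hcont
    (ε := (2⁻¹ : ℝ) ^ k) (δ := 2⁻¹ ^ k) (pow_pos (by norm_num) k) (ENNReal.pow_pos (by norm_num) k)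
  let τ (k : ℕ) (t : ℝ) : ℝ := S + ⌊(t - S) / η k⌋₊ * η k
  let F (k : ℕ) (p : ℝ × X) : E := (hmeas (τ k p.1)).mk _ p.2
  have hF : ∀ k, StronglyMeasurable (F k) := fun k =>
    stronglyMeasurable_prod_of_nat_index (G := fun j => (hmeas (S + j * η k)).mk _)
      ((measurable_id.sub_const S).div_const (η k)).nat_floor
      fun _ => (hmeas _).stronglyMeasurable_mk
  refine ⟨fun p => limUnder atTop (F · p), .limUnder hF, fun t ht => ?_⟩
  have hτ k := floor_grid_mem_Icc_dist_lt (hη k) ht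
  filter_upwards [ae_tendsto_of_measure_le_inv_two_pow fun k => hημ k _ (hτ k).1 t ht (hτ k).2,
    ae_all_iff.2 fun k => (hmeas (τ k t)).ae_eq_mk] with x hx hF_eq
  exact ((hx.congr hF_eq).limUnder_eq).symm

/-- Lemma 2.2 of the paper: if `φ : [S,T] → L(X;E)` is continuous into the space of
`E`-valued measurable functions with the topology of convergence in measure `μ`
(a finite measure), then there is a jointly measurable function `φ' : [S,T] × X → E`
such that for every `t ∈ [S,T]`, `φ(t) = φ'(t,·)` `μ`-a.e. -/
theorem stmt2 {X : Type*} [MeasurableSpace X] (μ : Measure X) [IsFiniteMeasure μ]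
    {E : Type*} [NormedAddCommGroup E] [NormedSpace ℝ E] [CompleteSpace E]
    (S T : ℝ) (hS : 0 ≤ S) (hST : S < T)
    (φ : ℝ → X → E)
    (hmeas : ∀ t, AEStronglyMeasurable (φ t) μ)
    (hcont : ∀ t₀ ∈ Icc S T, ∀ u : ℕ → ℝ, (∀ n, u n ∈ Icc S T) →
      Tendsto u atTop (𝓝 t₀) →
      TendstoInMeasure μ (fun n => φ (u n)) atTop (φ t₀)) :
    ∃ φ' : ℝ × X → E, StronglyMeasurable φ' ∧
      ∀ t ∈ Icc S T, ∀ᵐ x ∂μ, φ t x = φ' (t, x) :=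
  stmt2_general μ S T φ hmeas hcont
end

section
/- Let 0 ≤ S < T < ∞, let (Ω, F, P) be a probability space with filtration F = (F_t), and let Z : [S,T]² × Ω → H (H a Euclidean space) be jointly measurable with Z(t,·) ∈ L¹_F(S,T;H) for each t and t ↦ Z(t,·) continuous into L¹_F(S,T;H). Suppose Z₁, Z₂ ∈ L¹_F(S,T;H) both satisfy Property (D) with respect to Z, i.e. for i = 1,2 and every t ∈ [S,T): lim_{ε↓0} (1/ε) E[∫_t^{t+ε} |Z(t,s) − Z_i(s)| ds] = 0. Then Z₁(s,ω) = Z₂(s,ω) for Leb⊗P-a.e. (s,ω) ∈ [S,T] × Ω. -/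
/-!
Put `φ(s) = E‖Z₁(s) - Z₂(s)‖`. It is integrable on `[S, T]`, and the triangle inequality through
`Z(t, ·)` shows that its right averages `ε⁻¹ ∫_t^{t+ε} φ` tend to `0` at every `t ∈ [S, T)`.
So the primitive of `φ` has vanishing right derivative on `[S, T)` and is therefore constant:
`∫_S^T φ = 0`, which forces `Z₁ = Z₂` almost everywhere.
-/

open MeasureTheory Filter Set ENNReal
open scoped Topology

theorem MeasureTheory.IsStronglyProgressive.measurable_uncurry {Ω E : Type*}
    {mΩ : MeasurableSpace Ω} {F : Filtration ℝ mΩ} [TopologicalSpace E] [MeasurableSpace E]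
    [TopologicalSpace.PseudoMetrizableSpace E] [BorelSpace E] {u : ℝ → Ω → E}
    (hu : IsStronglyProgressive F u) :
    Measurable fun p : ℝ × Ω => u p.1 p.2 := by
  intro B hB
  let ι := fun (n : ℕ) (p : Iic (n : ℝ) × Ω) => ((p.1 : ℝ), p.2)
  have hι : ∀ n, MeasurableEmbedding (ι n) := fun n =>
    (MeasurableEmbedding.subtype_coe measurableSet_Iic).prodMap .id
  have hpre : (fun p : ℝ × Ω => u p.1 p.2) ⁻¹' B =
      ⋃ n : ℕ, ι n '' ((fun p : Iic (n : ℝ) × Ω => u p.1 p.2) ⁻¹' B) := by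
    ext ⟨t, ω⟩
    simp only [mem_preimage, mem_iUnion, mem_image, ι, Prod.ext_iff]
    refine ⟨fun h => ?_, fun ⟨_, _, h, ht, hω⟩ => ht ▸ hω ▸ h⟩
    obtain ⟨n, hn⟩ := exists_nat_ge t
    exact ⟨n, ⟨⟨t, hn⟩, ω⟩, h, rfl, rfl⟩
  rw [hpre]
  refine .iUnion fun n => (hι n).measurableSet_image' ?_
  have hle : (Subtype.instMeasurableSpace : MeasurableSpace (Iic (n : ℝ))).prod (F n) ≤
      Subtype.instMeasurableSpace.prod mΩ :=
    sup_le_sup_left (MeasurableSpace.comap_mono (F.le n)) _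
  have hun : Measurable[Subtype.instMeasurableSpace.prod (F n)]
      fun p : Iic (n : ℝ) × Ω => u p.1 p.2 := (hu n).measurable
  exact hun.mono hle le_rfl hB

theorem lintegral_lintegral_norm_sub_le {α Ω E : Type*} [MeasurableSpace α] [MeasurableSpace Ω]
    [NormedAddCommGroup E] [MeasurableSpace E] [BorelSpace E] [SecondCountableTopology E]
    {μ : Measure α} [SFinite μ] {ν : Measure Ω} {u v w : α → Ω → E}
    (hu : Measurable fun p : α × Ω => u p.1 p.2) (hv : Measurable fun p : α × Ω => v p.1 p.2) :
    ∫⁻ ω, ∫⁻ s, ENNReal.ofReal ‖u s ω - w s ω‖ ∂μ ∂ν ≤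
      (∫⁻ ω, ∫⁻ s, ENNReal.ofReal ‖v s ω - u s ω‖ ∂μ ∂ν) +
        ∫⁻ ω, ∫⁻ s, ENNReal.ofReal ‖v s ω - w s ω‖ ∂μ ∂ν := by
  have hvu : Measurable fun p : α × Ω => ENNReal.ofReal ‖v p.1 p.2 - u p.1 p.2‖ :=
    (hv.sub hu).norm.ennreal_ofReal
  have hvu' : Measurable fun ω => ∫⁻ s, ENNReal.ofReal ‖v s ω - u s ω‖ ∂μ :=
    (hvu.comp measurable_swap).lintegral_prod_right'
  rw [← lintegral_add_left hvu']
  refine lintegral_mono fun ω => ?_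
  have hvuω : Measurable fun s => ENNReal.ofReal ‖v s ω - u s ω‖ :=
    hvu.comp (measurable_id.prodMk measurable_const)
  rw [← lintegral_add_left hvuω]
  refine lintegral_mono fun s => ?_
  rw [← ENNReal.ofReal_add (norm_nonneg _) (norm_nonneg _)]
  refine ENNReal.ofReal_le_ofReal ?_
  calc ‖u s ω - w s ω‖ = ‖(v s ω - w s ω) - (v s ω - u s ω)‖ := by congr 1; abel
    _ ≤ ‖v s ω - u s ω‖ + ‖v s ω - w s ω‖ := (norm_sub_le _ _).trans_eq (add_comm _ _)

theorem hasDerivWithinAt_primitive_Ici_zero_of_tendsto {g : ℝ → ℝ} (hg : Integrable g) (a t : ℝ)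
    (h : Tendsto (fun ε => ε⁻¹ * ∫ s in t..t + ε, g s) (𝓝[>] 0) (𝓝 0)) :
    HasDerivWithinAt (fun x => ∫ s in a..x, g s) 0 (Ici t) t := by
  rw [hasDerivWithinAt_iff_tendsto_slope, Ici_sdiff_left]
  have hsub : Tendsto (· - t) (𝓝[>] t) (𝓝[>] 0) := by
    refine tendsto_nhdsWithin_iff.2
      ⟨?_, eventually_nhdsWithin_of_forall fun y (hy : t < y) => sub_pos.2 hy⟩
    simpa using ((continuous_sub_right t).tendsto t).mono_left nhdsWithin_le_nhds
  refine (h.comp hsub).congr fun y => ?_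
  rw [Function.comp_apply, add_sub_cancel, slope_def_field, div_eq_inv_mul,
    intervalIntegral.integral_interval_sub_left hg.intervalIntegrable hg.intervalIntegrable]

theorem intervalIntegral_eq_zero_of_tendsto_average_right {g : ℝ → ℝ} (hg : Integrable g)
    {a b : ℝ} (hab : a ≤ b)
    (h : ∀ t ∈ Ico a b, Tendsto (fun ε => ε⁻¹ * ∫ s in t..t + ε, g s) (𝓝[>] 0) (𝓝 0)) :
    ∫ s in a..b, g s = 0 := by
  have hconst := constant_of_has_deriv_right_zero (hg.continuous_primitive a).continuousOn
    fun t ht => hasDerivWithinAt_primitive_Ici_zero_of_tendsto hg a t (h t ht)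
  simpa using hconst b ⟨hab, le_rfl⟩

theorem setLIntegral_Icc_eq_zero_of_tendsto_average_right {φ : ℝ → ℝ≥0∞} (hφ : Measurable φ)
    {a b : ℝ} (hab : a ≤ b) (hfin : ∫⁻ s in Icc a b, φ s ≠ ∞)
    (h : ∀ t ∈ Ico a b, Tendsto (fun ε => (ENNReal.ofReal ε)⁻¹ * ∫⁻ s in Icc t (t + ε), φ s)
      (𝓝[>] 0) (𝓝 0)) :
    ∫⁻ s in Icc a b, φ s = 0 := by
  set ψ := (Icc a b).indicator φ
  have hψ : Measurable ψ := hφ.indicator measurableSet_Icc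
  have hψfin : ∫⁻ s, ψ s ≠ ∞ := by rwa [lintegral_indicator measurableSet_Icc]
  have hψ_Icc : ∀ c d, c ≤ d → ∫ s in c..d, (ψ s).toReal = (∫⁻ s in Icc c d, ψ s).toReal := by
    intro c d hcd
    rw [intervalIntegral.integral_of_le hcd, ← Measure.restrict_congr_set Ioc_ae_eq_Icc]
    exact integral_toReal hψ.aemeasurable.restrict (ae_restrict_of_ae (ae_lt_top hψ hψfin))
  have hreal := intervalIntegral_eq_zero_of_tendsto_average_right
    (integrable_toReal_of_lintegral_ne_top hψ.aemeasurable hψfin) hab fun t ht => ?_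
  · have hψφ : ∫⁻ s in Icc a b, ψ s = ∫⁻ s in Icc a b, φ s :=
      setLIntegral_congr_fun measurableSet_Icc fun s hs => indicator_of_mem hs φ
    rw [hψ_Icc a b hab, ENNReal.toReal_eq_zero_iff, hψφ] at hreal
    exact hreal.resolve_right hfin
  have hψt : Tendsto (fun ε => (ENNReal.ofReal ε)⁻¹ * ∫⁻ s in Icc t (t + ε), ψ s)
      (𝓝[>] 0) (𝓝 0) :=
    tendsto_of_tendsto_of_tendsto_of_le_of_le tendsto_const_nhds (h t ht) (fun _ => zero_le)
      fun ε => mul_le_mul_right (lintegral_mono (indicator_le_self _ φ)) _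
  have hψt_real := (ENNReal.tendsto_toReal zero_ne_top).comp hψt
  rw [ENNReal.toReal_zero] at hψt_real
  refine hψt_real.congr' ?_
  filter_upwards [self_mem_nhdsWithin] with ε (hε : 0 < ε)
  rw [Function.comp_apply, ENNReal.toReal_mul, ENNReal.toReal_inv, ENNReal.toReal_ofReal hε.le,
    hψ_Icc t (t + ε) (by linarith)]

theorem ae_eq_of_lintegral_ofReal_norm_sub_eq_zero {α E : Type*} [MeasurableSpace α]
    {μ : Measure α} [NormedAddCommGroup E] [MeasurableSpace E] [BorelSpace E]
    [SecondCountableTopology E] {f g : α → E} (hf : Measurable f) (hg : Measurable g)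
    (h : ∫⁻ x, ENNReal.ofReal ‖f x - g x‖ ∂μ = 0) :
    f =ᵐ[μ] g := by
  filter_upwards [(lintegral_eq_zero_iff (hf.sub hg).norm.ennreal_ofReal).1 h] with x hx
  simpa [sub_eq_zero] using hx

theorem stmt3_general {Ω : Type*} {mΩ : MeasurableSpace Ω} (P : Measure Ω) [IsProbabilityMeasure P]
    (F : MeasureTheory.Filtration ℝ mΩ)
    {n : ℕ} (S T : ℝ) (hST : S < T)
    (Z : ℝ → ℝ → Ω → EuclideanSpace ℝ (Fin n))
    (hZprog : ∀ t, ProgMeasurable F (Z t))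
    (Z₁ Z₂ : ℝ → Ω → EuclideanSpace ℝ (Fin n))
    (h₁prog : ProgMeasurable F Z₁) (h₂prog : ProgMeasurable F Z₂)
    (h₁int : (∫⁻ ω, ∫⁻ s in Icc S T, ENNReal.ofReal ‖Z₁ s ω‖ ∂volume ∂P) < ⊤)
    (h₂int : (∫⁻ ω, ∫⁻ s in Icc S T, ENNReal.ofReal ‖Z₂ s ω‖ ∂volume ∂P) < ⊤)
    (hD₁ : ∀ t ∈ Ico S T,
      Tendsto (fun ε : ℝ =>
          (ENNReal.ofReal ε)⁻¹ *
            ∫⁻ ω, ∫⁻ s in Icc t (t + ε), ENNReal.ofReal ‖Z t s ω - Z₁ s ω‖ ∂volume ∂P)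
        (𝓝[>] (0:ℝ)) (𝓝 0))
    (hD₂ : ∀ t ∈ Ico S T,
      Tendsto (fun ε : ℝ =>
          (ENNReal.ofReal ε)⁻¹ *
            ∫⁻ ω, ∫⁻ s in Icc t (t + ε), ENNReal.ofReal ‖Z t s ω - Z₂ s ω‖ ∂volume ∂P)
        (𝓝[>] (0:ℝ)) (𝓝 0)) :
    ∀ᵐ q ∂((volume.restrict (Icc S T)).prod P), Z₁ q.1 q.2 = Z₂ q.1 q.2 := by
  have hZ₁ := IsStronglyProgressive.measurable_uncurry h₁prog
  have hZ₂ := IsStronglyProgressive.measurable_uncurry h₂prog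
  have hZ := fun t => IsStronglyProgressive.measurable_uncurry (hZprog t)
  have hdiff : Measurable fun p : ℝ × Ω => ENNReal.ofReal ‖Z₁ p.1 p.2 - Z₂ p.1 p.2‖ :=
    (hZ₁.sub hZ₂).norm.ennreal_ofReal
  set φ : ℝ → ℝ≥0∞ := fun s => ∫⁻ ω, ENNReal.ofReal ‖Z₁ s ω - Z₂ s ω‖ ∂P
  have hswap : ∀ A : Set ℝ, ∫⁻ s in A, φ s =
      ∫⁻ ω, ∫⁻ s in A, ENNReal.ofReal ‖Z₁ s ω - Z₂ s ω‖ ∂volume ∂P :=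
    fun A => (lintegral_lintegral_swap (f := fun ω s => ENNReal.ofReal ‖Z₁ s ω - Z₂ s ω‖)
      (hdiff.comp measurable_swap).aemeasurable).symm
  have hfin : ∫⁻ s in Icc S T, φ s ≠ ∞ := by
    rw [hswap]
    refine ((lintegral_lintegral_norm_sub_le (v := 0) hZ₁ measurable_const).trans_lt ?_).ne
    simpa using ENNReal.add_lt_top.2 ⟨h₁int, h₂int⟩
  have hD : ∀ t ∈ Ico S T, Tendsto (fun ε => (ENNReal.ofReal ε)⁻¹ * ∫⁻ s in Icc t (t + ε), φ s)
      (𝓝[>] 0) (𝓝 0) := fun t ht =>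
    tendsto_of_tendsto_of_tendsto_of_le_of_le tendsto_const_nhds
      (by simpa only [add_zero] using (hD₁ t ht).add (hD₂ t ht)) (fun _ => zero_le) fun ε => by
        rw [hswap, ← mul_add]
        exact mul_le_mul_right (lintegral_lintegral_norm_sub_le hZ₁ (hZ t)) _
  have hφ_zero := setLIntegral_Icc_eq_zero_of_tendsto_average_right hdiff.lintegral_prod_right'
    hST.le hfin hD
  refine ae_eq_of_lintegral_ofReal_norm_sub_eq_zero hZ₁ hZ₂ ?_
  rwa [lintegral_prod _ hdiff.aemeasurable]

/-- Lemma 2.5 of the paper: uniqueness of the process satisfying Property (D).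
If `Z(t,·)` is an `L¹` two-parameter process, continuous in `t` into `L¹`, and both
`Z₁, Z₂ ∈ L¹_F(S,T;H)` satisfy Property (D) with respect to `Z`, then `Z₁ = Z₂`
`Leb⊗P`-a.e. -/
theorem stmt3 {Ω : Type*} {mΩ : MeasurableSpace Ω} (P : Measure Ω) [IsProbabilityMeasure P]
    (F : MeasureTheory.Filtration ℝ mΩ)
    {n : ℕ} (S T : ℝ) (hS : 0 ≤ S) (hST : S < T)
    (Z : ℝ → ℝ → Ω → EuclideanSpace ℝ (Fin n))
    (hZmeas : Measurable (fun q : (ℝ × ℝ) × Ω => Z q.1.1 q.1.2 q.2))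
    (hZprog : ∀ t, ProgMeasurable F (Z t))
    (hZint : ∀ t ∈ Icc S T,
      (∫⁻ ω, ∫⁻ s in Icc S T, ENNReal.ofReal ‖Z t s ω‖ ∂volume ∂P) < ⊤)
    (hZcont : ∀ t₀ ∈ Icc S T,
      Tendsto (fun t => ∫⁻ ω, ∫⁻ s in Icc S T, ENNReal.ofReal ‖Z t s ω - Z t₀ s ω‖ ∂volume ∂P)
        (𝓝[Icc S T] t₀) (𝓝 0))
    (Z₁ Z₂ : ℝ → Ω → EuclideanSpace ℝ (Fin n))
    (h₁prog : ProgMeasurable F Z₁) (h₂prog : ProgMeasurable F Z₂)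
    (h₁int : (∫⁻ ω, ∫⁻ s in Icc S T, ENNReal.ofReal ‖Z₁ s ω‖ ∂volume ∂P) < ⊤)
    (h₂int : (∫⁻ ω, ∫⁻ s in Icc S T, ENNReal.ofReal ‖Z₂ s ω‖ ∂volume ∂P) < ⊤)
    (hD₁ : ∀ t ∈ Ico S T,
      Tendsto (fun ε : ℝ =>
          (ENNReal.ofReal ε)⁻¹ *
            ∫⁻ ω, ∫⁻ s in Icc t (t + ε), ENNReal.ofReal ‖Z t s ω - Z₁ s ω‖ ∂volume ∂P)
        (𝓝[>] (0:ℝ)) (𝓝 0))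
    (hD₂ : ∀ t ∈ Ico S T,
      Tendsto (fun ε : ℝ =>
          (ENNReal.ofReal ε)⁻¹ *
            ∫⁻ ω, ∫⁻ s in Icc t (t + ε), ENNReal.ofReal ‖Z t s ω - Z₂ s ω‖ ∂volume ∂P)
        (𝓝[>] (0:ℝ)) (𝓝 0)) :
    ∀ᵐ q ∂((volume.restrict (Icc S T)).prod P), Z₁ q.1 q.2 = Z₂ q.1 q.2 :=
  stmt3_general P F S T hST Z hZprog Z₁ Z₂ h₁prog h₂prog h₁int h₂int hD₁ hD₂
end

section
/- Let 0 ≤ S < T < ∞, and let φ : [S,T] → L¹(Ω;ℝ) be Bochner integrable, identified with a jointly measurable process φ(s,ω). Fix a filtration (F_t) such that φ(t) is F_t-measurable for each t. Assume that for every t ∈ [S,T) and every nonnegative bounded F_t-measurable random variable ξ_t, liminf_{ε↓0} (1/ε) E[(∫_t^{t+ε} φ(s) ds) ξ_t] ≥ 0. Then φ(s,ω) ≥ 0 for Leb⊗P-a.e. (s,ω) ∈ [S,T] × Ω. -/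
/-!
View `φ` as a curve `t ↦ φ t` in `L¹(P)`. Almost every `t` is a right Lebesgue point of this
curve: `ε⁻¹ ∫_t^{t+ε} ‖φ s - φ t‖_{L¹(P)} ds → 0`. At such a `t` the averages in the hypothesis
converge to `E[φ t · ξ]`, so `E[φ t ; A] ≥ 0` for every `A ∈ F t`, and since `φ t` is
`F t`-measurable this forces `φ t ≥ 0` almost surely.

The Lebesgue point property reduces to the scalar Lebesgue differentiation theorem: sets whose
sections are locally constant to the right in time form a ring generating the product σ-algebra,
so `φ` is `L¹`-close to some `g` with `s ↦ g s` locally constant to the right. If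
`‖φ - g‖_{L¹} ≤ δ`, then at almost every `t` the limsup of the averages is at most
`2 ‖φ t - g t‖_{L¹(P)}`, a function of `t` with integral at most `2δ`; Markov's inequality then
shows that the averages fail to tend to `0` only on a null set.
-/

open MeasureTheory Filter Set Function
open scoped Topology symmDiff

def IsRightLocallyConstant {α β : Type*} [TopologicalSpace α] [Preorder α] (g : α → β) : Prop :=
  ∀ t, ∀ᶠ s in 𝓝[≥] t, g s = g t

namespace IsRightLocallyConstant

variable {α β γ δ : Type*} [TopologicalSpace α] [Preorder α]

lemma comp₂ {f : α → β} {g : α → γ} (hf : IsRightLocallyConstant f)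
    (hg : IsRightLocallyConstant g) (F : β → γ → δ) :
    IsRightLocallyConstant fun s => F (f s) (g s) := fun t => by
  filter_upwards [hf t, hg t] with s hfs hgs
  rw [hfs, hgs]

end IsRightLocallyConstant

section SetRing

variable {α Ω : Type*} [TopologicalSpace α] [LinearOrder α] [MeasurableSpace α] [MeasurableSpace Ω]

variable (α Ω) in
def rightLocallyConstantSets : Set (Set (α × Ω)) :=
  {A | MeasurableSet A ∧ IsRightLocallyConstant fun s => Prod.mk s ⁻¹' A}

lemma isSetRing_rightLocallyConstantSets : IsSetRing (rightLocallyConstantSets α Ω) where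
  empty_mem := ⟨.empty, fun _ => .of_forall fun _ => rfl⟩
  union_mem _ _ hA hB := ⟨hA.1.union hB.1, hA.2.comp₂ hB.2 (· ∪ ·)⟩
  sdiff_mem _ _ hA hB := ⟨hA.1.diff hB.1, hA.2.comp₂ hB.2 (· \ ·)⟩

variable [OrderTopology α]

lemma fst_preimage_Iio_mem_rightLocallyConstantSets [OpensMeasurableSpace α] (a : α) :
    Prod.fst ⁻¹' Iio a ∈ rightLocallyConstantSets α Ω := by
  refine ⟨measurable_fst measurableSet_Iio, fun t => ?_⟩
  rcases lt_or_ge t a with hta | hat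
  · filter_upwards [Ico_mem_nhdsGE hta] with s hs
    simp [preimage, hs.2, hta]
  · filter_upwards [self_mem_nhdsWithin] with s (hs : t ≤ s)
    simp [preimage, not_lt.2 hat, not_lt.2 (hat.trans hs)]

lemma generateFrom_rightLocallyConstantSets [SecondCountableTopology α] [BorelSpace α] :
    MeasurableSpace.generateFrom (rightLocallyConstantSets α Ω) = Prod.instMeasurableSpace := by
  refine le_antisymm (MeasurableSpace.generateFrom_le fun A hA => hA.1) (sup_le ?_ ?_)
  · refine Measurable.comap_le <| measurable_of_Iio (mδ := MeasurableSpace.generateFrom _)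
      fun a => MeasurableSpace.measurableSet_generateFrom ?_
    exact fst_preimage_Iio_mem_rightLocallyConstantSets a
  · refine Measurable.comap_le fun B hB => MeasurableSpace.measurableSet_generateFrom ?_
    exact ⟨measurable_snd hB, fun t => .of_forall fun s => rfl⟩

end SetRing

section Density

variable {α Ω : Type*} [TopologicalSpace α] [LinearOrder α] [OrderTopology α]
  [SecondCountableTopology α] [MeasurableSpace α] [BorelSpace α] [MeasurableSpace Ω]
  {μ : Measure (α × Ω)} [IsFiniteMeasure μ]

lemma exists_mem_rightLocallyConstantSets_measure_symmDiff_lt {s : Set (α × Ω)}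
    (hs : MeasurableSet s) {ε : ENNReal} (hε : 0 < ε) :
    ∃ A ∈ rightLocallyConstantSets α Ω, μ (A ∆ s) < ε :=
  exists_measure_symmDiff_lt_of_generateFrom_isSetRing isSetRing_rightLocallyConstantSets
    ⟨{univ}, countable_singleton _,
      singleton_subset_iff.2 ⟨.univ, fun _ => .of_forall fun _ => rfl⟩, by simp⟩
    generateFrom_rightLocallyConstantSets.symm hs hε

lemma exists_isRightLocallyConstant_eLpNorm_sub_indicator_le (c : ℝ) {s : Set (α × Ω)}
    (hs : MeasurableSet s) {ε : ENNReal} (hε : ε ≠ 0) :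
    ∃ G : α × Ω → ℝ, eLpNorm (G - s.indicator fun _ => c) 1 μ ≤ ε ∧
      IsRightLocallyConstant (curry G) ∧ MemLp G 1 μ := by
  obtain ⟨A, hA, hAs⟩ := exists_mem_rightLocallyConstantSets_measure_symmDiff_lt (μ := μ) hs
    (ENNReal.div_pos hε (enorm_ne_top (x := c)))
  refine ⟨A.indicator fun _ => c, ?_, fun t => ?_,
    memLp_indicator_const 1 hA.1 c (.inr (measure_ne_top _ _))⟩
  · calc eLpNorm (A.indicator (fun _ => c) - s.indicator fun _ => c) 1 μ
        = eLpNorm ((A ∆ s).indicator fun _ => c) 1 μ := eLpNorm_indicator_sub_indicator _ _ _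
      _ ≤ ‖c‖ₑ * μ (A ∆ s) := by simpa using eLpNorm_indicator_const_le c 1
      _ ≤ ε := ENNReal.mul_le_of_le_div' hAs.le
  · filter_upwards [hA.2 t] with s hs
    funext ω
    change (Prod.mk s ⁻¹' A).indicator (fun _ => c) ω = (Prod.mk t ⁻¹' A).indicator (fun _ => c) ω
    rw [hs]

theorem MeasureTheory.Integrable.exists_isRightLocallyConstant_integral_norm_sub_le
    {f : α × Ω → ℝ} (hf : Integrable f μ) {δ : ℝ} (hδ : 0 < δ) :
    ∃ g : α → Ω → ℝ, IsRightLocallyConstant g ∧ Integrable (uncurry g) μ ∧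
      ∫ p, ‖f p - uncurry g p‖ ∂μ ≤ δ := by
  obtain ⟨G, hfG, hG, hGi⟩ := (memLp_one_iff_integrable.2 hf).induction_dense ENNReal.one_ne_top
    (fun G => IsRightLocallyConstant (curry G) ∧ MemLp G 1 μ)
    (fun c _ hs _ _ hε => exists_isRightLocallyConstant_eLpNorm_sub_indicator_le c hs hε)
    (fun G H hG hH => ⟨hG.1.comp₂ hH.1 fun x y : Ω → ℝ => x + y, hG.2.add hH.2⟩)
    (fun G hG => hG.2.1) (ENNReal.ofReal_pos.2 hδ).ne'
  have hGi := memLp_one_iff_integrable.1 hGi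
  refine ⟨curry G, hG, by rwa [uncurry_curry], ?_⟩
  rw [uncurry_curry]
  refine (integral_norm_eq_lintegral_enorm (hf.sub hGi).1).trans_le ?_
  exact ENNReal.toReal_le_of_le_ofReal hδ.le (by simpa [eLpNorm_one_eq_lintegral_enorm] using hfG)

end Density

lemma integral_norm_sub_le_add {α E : Type*} [MeasurableSpace α] [NormedAddCommGroup E]
    [NormedSpace ℝ E] {μ : Measure α} {f g h : α → E} (hf : Integrable (fun x => f x - h x) μ)
    (hg : Integrable (fun x => g x - h x) μ) :
    ∫ x, ‖f x - g x‖ ∂μ ≤ ∫ x, ‖f x - h x‖ ∂μ + ∫ x, ‖g x - h x‖ ∂μ := by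
  rw [← integral_add hf.norm hg.norm]
  refine integral_mono_of_nonneg (.of_forall fun _ => norm_nonneg _) (hf.norm.add hg.norm)
    (.of_forall fun x => ?_)
  simpa only [norm_sub_rev (g x)] using norm_sub_le_norm_sub_add_norm_sub (f x) (h x) (g x)

lemma eventually_forall_Icc_of_eventually_nhdsGE {p : ℝ → Prop} {t : ℝ}
    (h : ∀ᶠ s in 𝓝[≥] t, p s) : ∀ᶠ ε in 𝓝[>] 0, ∀ s ∈ Icc t (t + ε), p s := by
  obtain ⟨u, hu, hsub⟩ := mem_nhdsGE_iff_exists_Ico_subset.1 h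
  filter_upwards [Ioo_mem_nhdsGT (sub_pos.2 hu)] with ε hε s hs
  exact hsub ⟨hs.1, by linarith [hs.2, hε.2]⟩

lemma ae_restrict_Icc_mem_Ioo (a b : ℝ) : ∀ᵐ t ∂volume.restrict (Icc a b), t ∈ Ioo a b := by
  rw [← Measure.restrict_congr_set Ioo_ae_eq_Icc]
  exact ae_restrict_mem measurableSet_Ioo

lemma MeasureTheory.IntegrableOn.ae_tendsto_inv_mul_intervalIntegral {r : ℝ → ℝ} {a b : ℝ}
    (hr : IntegrableOn r (Icc a b)) :
    ∀ᵐ t ∂volume.restrict (Icc a b),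
      Tendsto (fun ε => ε⁻¹ * ∫ s in t..t + ε, r s) (𝓝[>] 0) (𝓝 (r t)) := by
  rcases lt_or_ge b a with hba | hab
  · simp [Icc_eq_empty_of_lt hba]
  have hab : IntervalIntegrable r volume a b :=
    (intervalIntegrable_iff_integrableOn_Icc_of_le hab).2 hr
  filter_upwards [ae_restrict_of_ae hab.ae_hasDerivAt_integral,
    ae_restrict_mem measurableSet_Icc] with t ht htab
  have htab' : t ∈ uIcc a b := Icc_subset_uIcc htab
  simpa using (hasDerivAt_iff_tendsto_slope_zero.1 (ht htab' t htab')).mono_left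
    (nhdsGT_le_nhdsNE 0)

section LebesguePoint

variable {Ω : Type*} {mΩ : MeasurableSpace Ω} {P : Measure Ω}

def IsRightLebesguePoint (P : Measure Ω) (φ : ℝ → Ω → ℝ) (t : ℝ) : Prop :=
  Tendsto (fun ε => ε⁻¹ * ∫ s in t..t + ε, ∫ ω, ‖φ s ω - φ t ω‖ ∂P) (𝓝[>] 0) (𝓝 0)

variable {a b : ℝ} {φ : ℝ → Ω → ℝ}

lemma ae_eventually_inv_mul_intervalIntegral_le [SFinite P]
    (hφ : Integrable (uncurry φ) ((volume.restrict (Icc a b)).prod P)) {g : ℝ → Ω → ℝ}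
    (hg : IsRightLocallyConstant g)
    (hgi : Integrable (uncurry g) ((volume.restrict (Icc a b)).prod P)) :
    ∀ᵐ t ∂volume.restrict (Icc a b), ∀ᶠ ε in 𝓝[>] 0,
      ε⁻¹ * ∫ s in t..t + ε, ∫ ω, ‖φ s ω - φ t ω‖ ∂P ≤
        ε⁻¹ * (∫ s in t..t + ε, ∫ ω, ‖φ s ω - g s ω‖ ∂P) + ∫ ω, ‖φ t ω - g t ω‖ ∂P := by
  set r := fun s => ∫ ω, ‖φ s ω - g s ω‖ ∂P
  have hr : IntegrableOn r (Icc a b) := (hφ.sub hgi).integral_norm_prod_left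
  have hsec : ∀ᵐ s ∂volume.restrict (Icc a b), Integrable (fun ω => φ s ω - g s ω) P :=
    (hφ.sub hgi).prod_right_ae
  filter_upwards [ae_restrict_Icc_mem_Ioo a b, hsec] with t ⟨hat, htb⟩ ht
  have hnear := eventually_forall_Icc_of_eventually_nhdsGE
    ((eventually_lt_nhds htb).filter_mono nhdsWithin_le_nhds |>.and (hg t))
  filter_upwards [hnear, self_mem_nhdsWithin] with ε hε (hε0 : 0 < ε)
  have hsub : Ioc t (t + ε) ⊆ Icc a b := fun s hs =>
    ⟨hat.le.trans hs.1.le, (hε s (Ioc_subset_Icc_self hs)).1.le⟩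
  have hpt : ∀ᵐ s ∂volume.restrict (Ioc t (t + ε)),
      ∫ ω, ‖φ s ω - φ t ω‖ ∂P ≤ r s + r t := by
    filter_upwards [ae_restrict_of_ae_restrict_of_subset hsub hsec,
      ae_restrict_mem measurableSet_Ioc] with s hs hsJ
    have hgs : g s = g t := (hε s (Ioc_subset_Icc_self hsJ)).2
    simp only [r, hgs] at hs ⊢
    exact integral_norm_sub_le_add hs ht
  rw [intervalIntegral.integral_of_le (by linarith), intervalIntegral.integral_of_le (by linarith)]
  calc ε⁻¹ * ∫ s in Ioc t (t + ε), ∫ ω, ‖φ s ω - φ t ω‖ ∂P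
      ≤ ε⁻¹ * ∫ s in Ioc t (t + ε), (r s + r t) := by
        refine mul_le_mul_of_nonneg_left (integral_mono_of_nonneg ?_ ?_ hpt) (by positivity)
        · exact .of_forall fun s => integral_nonneg fun ω => norm_nonneg _
        · exact (hr.mono_set hsub).add (integrableOn_const (by simp))
    _ = ε⁻¹ * (∫ s in Ioc t (t + ε), r s) + r t := by
        rw [integral_add (hr.mono_set hsub) (integrableOn_const (by simp)), setIntegral_const,
          Real.volume_real_Ioc_of_le (by linarith), add_sub_cancel_left, smul_eq_mul]
        field_simp

lemma ae_eventually_inv_mul_intervalIntegral_lt [IsFiniteMeasure P]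
    (hφ : Integrable (uncurry φ) ((volume.restrict (Icc a b)).prod P)) {η : ℝ} (hη : 0 < η) :
    ∀ᵐ t ∂volume.restrict (Icc a b), ∀ᶠ ε in 𝓝[>] 0,
      ε⁻¹ * ∫ s in t..t + ε, ∫ ω, ‖φ s ω - φ t ω‖ ∂P < η := by
  rw [ae_iff]
  refine le_antisymm (ENNReal.le_of_forall_pos_le_add fun δ hδ _ => ?_) bot_le
  obtain ⟨g, hg, hgi, hφg⟩ :=
    hφ.exists_isRightLocallyConstant_integral_norm_sub_le (δ := δ * η / 2) (by positivity)
  set r := fun s => ∫ ω, ‖φ s ω - g s ω‖ ∂P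
  have hr : IntegrableOn r (Icc a b) := (hφ.sub hgi).integral_norm_prod_left
  have hr_int : ∫ t in Icc a b, r t ≤ δ * η / 2 :=
    (integral_prod _ (hφ.sub hgi).norm).symm.trans_le hφg
  have hbad : {t | ¬∀ᶠ ε in 𝓝[>] 0, ε⁻¹ * ∫ s in t..t + ε, ∫ ω, ‖φ s ω - φ t ω‖ ∂P < η}
      ≤ᵐ[volume.restrict (Icc a b)] {t | η / 2 ≤ r t} := by
    filter_upwards [ae_eventually_inv_mul_intervalIntegral_le hφ hg hgi,
      hr.ae_tendsto_inv_mul_intervalIntegral] with t hle hlim hnot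
    by_contra hsmall
    refine hnot ?_
    filter_upwards [hle, hlim.eventually (gt_mem_nhds (by linarith [not_le.1 hsmall] :
      r t < η - r t))] with ε h₁ h₂
    linarith
  calc volume.restrict (Icc a b) _ ≤ volume.restrict (Icc a b) {t | η / 2 ≤ r t} :=
        measure_mono_ae hbad
    _ = ENNReal.ofReal ((volume.restrict (Icc a b)).real {t | η / 2 ≤ r t}) :=
        (ENNReal.ofReal_toReal (measure_ne_top _ _)).symm
    _ ≤ ENNReal.ofReal δ := by
        refine ENNReal.ofReal_le_ofReal (le_of_mul_le_mul_left ?_ (half_pos hη))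
        calc η / 2 * (volume.restrict (Icc a b)).real {t | η / 2 ≤ r t}
            ≤ ∫ t in Icc a b, r t :=
              mul_meas_ge_le_integral_of_nonneg (.of_forall fun _ => integral_nonneg fun _ =>
                norm_nonneg _) hr _
          _ ≤ η / 2 * δ := by linarith
    _ = 0 + δ := by simp

theorem ae_isRightLebesguePoint [IsFiniteMeasure P]
    (hφ : Integrable (uncurry φ) ((volume.restrict (Icc a b)).prod P)) :
    ∀ᵐ t ∂volume.restrict (Icc a b), IsRightLebesguePoint P φ t := by
  filter_upwards [ae_all_iff.2 fun n : ℕ =>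
    ae_eventually_inv_mul_intervalIntegral_lt hφ (Nat.one_div_pos_of_nat (n := n))] with t ht
  refine tendsto_order.2 ⟨fun c hc => ?_, fun c hc => ?_⟩
  · filter_upwards [self_mem_nhdsWithin] with ε (hε : 0 < ε)
    refine hc.trans_le (mul_nonneg (inv_nonneg.2 hε.le) ?_)
    exact intervalIntegral.integral_nonneg (by linarith) fun s _ =>
      integral_nonneg fun ω => norm_nonneg _
  · obtain ⟨n, hn⟩ := exists_nat_one_div_lt hc
    exact (ht n).mono fun ε h => h.trans hn

end LebesguePoint

lemma abs_integral_integral_mul_sub_le {α Ω : Type*} [MeasurableSpace α] [MeasurableSpace Ω]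
    {ν : Measure α} [IsFiniteMeasure ν] {P : Measure Ω} [SFinite P] {f : α → Ω → ℝ}
    (hf : Integrable (uncurry f) (ν.prod P)) {f₀ : Ω → ℝ} (hf₀ : Integrable f₀ P) {ξ : Ω → ℝ}
    (hξ : AEStronglyMeasurable ξ P) {C : ℝ} (hC : ∀ ω, ‖ξ ω‖ ≤ C) :
    |∫ ω, (∫ s, f s ω ∂ν) * ξ ω ∂P - ν.real univ * ∫ ω, f₀ ω * ξ ω ∂P| ≤
      C * ∫ s, ∫ ω, ‖f s ω - f₀ ω‖ ∂P ∂ν := by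
  have hdiff : Integrable (fun p : α × Ω => f p.1 p.2 - f₀ p.2) (ν.prod P) :=
    hf.sub (hf₀.comp_snd ν)
  have hψ : Integrable (uncurry fun s ω => (f s ω - f₀ ω) * ξ ω) (ν.prod P) :=
    hdiff.mul_bdd hξ.comp_snd (.of_forall fun p => hC p.2)
  have hswap : ∫ ω, (∫ s, f s ω ∂ν) * ξ ω ∂P - ν.real univ * ∫ ω, f₀ ω * ξ ω ∂P =
      ∫ s, ∫ ω, (f s ω - f₀ ω) * ξ ω ∂P ∂ν := by
    have h₁ : Integrable (fun ω => (∫ s, f s ω ∂ν) * ξ ω) P :=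
      hf.integral_prod_right.mul_bdd hξ (.of_forall hC)
    rw [integral_integral_swap hψ, ← integral_const_mul, ← integral_sub h₁
      ((hf₀.mul_bdd hξ (.of_forall hC)).const_mul _)]
    refine integral_congr_ae ?_
    filter_upwards [hf.prod_left_ae] with ω (hω : Integrable (f · ω) ν)
    rw [integral_mul_const, integral_sub hω (integrable_const _), integral_const, smul_eq_mul]
    ring
  rw [hswap, ← integral_const_mul, ← Real.norm_eq_abs]
  refine norm_integral_le_of_norm_le (g := fun s => C * ∫ ω, ‖f s ω - f₀ ω‖ ∂P)
    (hdiff.integral_norm_prod_left.const_mul C) ?_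
  filter_upwards [hdiff.prod_right_ae] with s hs
  rw [← integral_const_mul]
  refine norm_integral_le_of_norm_le (hs.norm.const_mul C) (.of_forall fun ω => ?_)
  rw [norm_mul, mul_comm]
  exact mul_le_mul_of_nonneg_right (hC ω) (norm_nonneg _)

theorem IsRightLebesguePoint.tendsto_inv_mul_integral_intervalIntegral_mul {Ω : Type*}
    {mΩ : MeasurableSpace Ω} {P : Measure Ω} [SFinite P] {φ : ℝ → Ω → ℝ} {t u : ℝ}
    (hL : IsRightLebesguePoint P φ t) (htu : t < u)
    (hφ : Integrable (uncurry φ) ((volume.restrict (Ioc t u)).prod P)) (hφt : Integrable (φ t) P)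
    {ξ : Ω → ℝ} (hξ : AEStronglyMeasurable ξ P) {C : ℝ} (hC : ∀ ω, ‖ξ ω‖ ≤ C) :
    Tendsto (fun ε => ε⁻¹ * ∫ ω, (∫ s in t..t + ε, φ s ω) * ξ ω ∂P) (𝓝[>] 0)
      (𝓝 (∫ ω, φ t ω * ξ ω ∂P)) := by
  rw [tendsto_iff_norm_sub_tendsto_zero]
  refine squeeze_zero' (.of_forall fun _ => norm_nonneg _) ?_ (by simpa using hL.const_mul C)
  filter_upwards [Ioo_mem_nhdsGT (sub_pos.2 htu)] with ε ⟨hε0, hεu⟩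
  have hsub : Ioc t (t + ε) ⊆ Ioc t u := Ioc_subset_Ioc_right (by linarith)
  have hbound := abs_integral_integral_mul_sub_le
    (hφ.mono_measure (Measure.prod_mono (Measure.restrict_mono hsub le_rfl) le_rfl)) hφt hξ hC
  rw [measureReal_restrict_apply_univ, Real.volume_real_Ioc_of_le (by linarith),
    add_sub_cancel_left] at hbound
  simp only [intervalIntegral.integral_of_le (by linarith : t ≤ t + ε)]
  calc ‖ε⁻¹ * ∫ ω, (∫ s in Ioc t (t + ε), φ s ω) * ξ ω ∂P - ∫ ω, φ t ω * ξ ω ∂P‖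
      = ‖ε⁻¹ * (∫ ω, (∫ s in Ioc t (t + ε), φ s ω) * ξ ω ∂P - ε * ∫ ω, φ t ω * ξ ω ∂P)‖ := by
        congr 1
        field_simp
    _ = ε⁻¹ * |∫ ω, (∫ s in Ioc t (t + ε), φ s ω) * ξ ω ∂P - ε * ∫ ω, φ t ω * ξ ω ∂P| := by
        rw [norm_mul, Real.norm_of_nonneg (inv_nonneg.2 hε0.le), Real.norm_eq_abs]
    _ ≤ ε⁻¹ * (C * ∫ s in Ioc t (t + ε), ∫ ω, ‖φ s ω - φ t ω‖ ∂P) := by gcongr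
    _ = C * (ε⁻¹ * ∫ s in Ioc t (t + ε), ∫ ω, ‖φ s ω - φ t ω‖ ∂P) := by ring

theorem MeasureTheory.StronglyMeasurable.ae_nonneg_of_forall_setIntegral_nonneg {Ω : Type*}
    {m m₀ : MeasurableSpace Ω} (hm : m ≤ m₀) {μ : Measure Ω} {f : Ω → ℝ}
    (hfm : StronglyMeasurable[m] f) (hf : Integrable f μ)
    (h : ∀ s, MeasurableSet[m] s → 0 ≤ ∫ x in s, f x ∂μ) : 0 ≤ᵐ[μ] f :=
  ae_of_ae_trim hm <| MeasureTheory.ae_nonneg_of_forall_setIntegral_nonneg (hf.trim hm hfm)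
    fun s hs _ => setIntegral_trim hm hfm hs ▸ h s hs

theorem stmt5_general {Ω : Type*} {mΩ : MeasurableSpace Ω} (P : Measure Ω) [IsProbabilityMeasure P]
    (F : MeasureTheory.Filtration ℝ mΩ)
    (S T : ℝ)
    (φ : ℝ → Ω → ℝ)
    (hmeas : Measurable (Function.uncurry φ))
    (hadapted : ∀ t, Measurable[F t] (φ t))
    (hint : Integrable (Function.uncurry φ) ((volume.restrict (Icc S T)).prod P))
    (h : ∀ t ∈ Ico S T, ∀ ξ : Ω → ℝ, Measurable[F t] ξ → (∀ ω, 0 ≤ ξ ω) →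
      (∃ C : ℝ, ∀ ω, ξ ω ≤ C) →
      0 ≤ Filter.liminf
        (fun ε : ℝ => (1/ε) * ∫ ω, (∫ s in t..(t + ε), φ s ω) * ξ ω ∂P)
        (𝓝[>] (0:ℝ))) :
    ∀ᵐ q ∂((volume.restrict (Icc S T)).prod P), 0 ≤ φ q.1 q.2 := by
  rw [Measure.ae_prod_iff_ae_ae (p := fun q => 0 ≤ φ q.1 q.2)
    (measurableSet_le measurable_const hmeas)]
  filter_upwards [ae_restrict_Icc_mem_Ioo S T, ae_isRightLebesguePoint hint,
    hint.prod_right_ae] with t ht hL (hφt : Integrable (φ t) P)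
  refine (hadapted t).stronglyMeasurable.ae_nonneg_of_forall_setIntegral_nonneg (F.le t) hφt
    fun A hA => ?_
  have hφ : Integrable (uncurry φ) ((volume.restrict (Ioc t T)).prod P) :=
    hint.mono_measure (Measure.prod_mono (Measure.restrict_mono
      (Ioc_subset_Icc_self.trans (Icc_subset_Icc_left ht.1.le)) le_rfl) le_rfl)
  have hlim := hL.tendsto_inv_mul_integral_intervalIntegral_mul ht.2 hφ hφt
    (measurable_one.indicator (F.le t _ hA)).aestronglyMeasurable (C := 1)
    fun ω => norm_indicator_le_norm_self 1 ω |>.trans_eq norm_one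
  have hnonneg := h t ⟨ht.1.le, ht.2⟩ (A.indicator 1) (measurable_const.indicator hA)
    (indicator_nonneg fun _ _ => zero_le_one) ⟨1, indicator_le_self' fun _ _ => zero_le_one⟩
  simp only [one_div] at hnonneg
  rw [hlim.liminf_eq] at hnonneg
  have hmul : ∀ ω, φ t ω * A.indicator 1 ω = A.indicator (φ t) ω := fun ω => by
    by_cases hω : ω ∈ A <;> simp [hω]
  simpa only [hmul, integral_indicator (F.le t _ hA)] using hnonneg

/-- Lemma A.5 of the paper: if `φ` is a Bochner-integrable adapted process on `[S,T]` and
for every `t ∈ [S,T)` and every nonnegative bounded `F_t`-measurable `ξ_t` one has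
`liminf_{ε↓0} (1/ε) E[(∫_t^{t+ε} φ(s) ds) ξ_t] ≥ 0`, then `φ ≥ 0` `Leb⊗P`-a.e. -/
theorem stmt5 {Ω : Type*} {mΩ : MeasurableSpace Ω} (P : Measure Ω) [IsProbabilityMeasure P]
    (F : MeasureTheory.Filtration ℝ mΩ)
    (S T : ℝ) (hS : 0 ≤ S) (hST : S < T)
    (φ : ℝ → Ω → ℝ)
    (hmeas : Measurable (Function.uncurry φ))
    (hadapted : ∀ t, Measurable[F t] (φ t))
    (hint : Integrable (Function.uncurry φ) ((volume.restrict (Icc S T)).prod P))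
    (h : ∀ t ∈ Ico S T, ∀ ξ : Ω → ℝ, Measurable[F t] ξ → (∀ ω, 0 ≤ ξ ω) →
      (∃ C : ℝ, ∀ ω, ξ ω ≤ C) →
      0 ≤ Filter.liminf
        (fun ε : ℝ => (1/ε) * ∫ ω, (∫ s in t..(t + ε), φ s ω) * ξ ω ∂P)
        (𝓝[>] (0:ℝ))) :
    ∀ᵐ q ∂((volume.restrict (Icc S T)).prod P), 0 ≤ φ q.1 q.2 :=
  stmt5_general P F S T φ hmeas hadapted hint h
end

section
/- Let 0 ≤ S < T < ∞, p, q ≥ 1, let H be a Euclidean space, and let Z : [S,T]² × Ω → H be such that t ↦ Z(t,·) is continuously differentiable as a map [S,T] → L^{p,q}_F(S,T;H) with derivative ∂_t Z. Define Diag[Z](s,ω) := Z(S,s,ω) + ∫_S^s ∂_t Z(τ,s,ω) dτ (set to 0 when the inner integral is not defined). Then Diag[Z] ∈ L^{p,q}_F(S,T;H) with the estimate ‖Diag[Z]‖_{L^{p,q}} ≤ ‖Z(S,·)‖_{L^{p,q}} + (T−S) sup_{t∈[S,T]} ‖∂_t Z(t,·)‖_{L^{p,q}}. -/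
/-!
Pointwise, `|Diag[Z](s)| ≤ |Z(S,s)| + ∫_S^T |∂_t Z(τ,s)| dτ`. Minkowski's inequality for sums in
the mixed `L^{p,q}` norm splits off `‖Z(S,·)‖`, and Minkowski's integral inequality, applied first
in `s` (exponent `q`) and then in `ω` (exponent `p`), takes the `τ`-integral outside the norm:
`‖∫_S^T |∂_t Z(τ,·)| dτ‖ ≤ ∫_S^T ‖∂_t Z(τ,·)‖ dτ ≤ (T - S) M`.
-/

open MeasureTheory Filter Set ENNReal
open scoped Topology

noncomputable section

/-- The `L^{p,q}_F(S,T;H)` norm `E[(∫_S^T |z(s)|^q ds)^{p/q}]^{1/p}` (in `ℝ≥0∞`). -/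
def LpqNorm {Ω : Type*} [MeasurableSpace Ω] (P : Measure Ω) (S T p q : ℝ)
    {n : ℕ} (z : ℝ → Ω → EuclideanSpace ℝ (Fin n)) : ℝ≥0∞ :=
  (∫⁻ ω, (∫⁻ s in Icc S T, (ENNReal.ofReal ‖z s ω‖) ^ q ∂volume) ^ (p/q) ∂P) ^ (1/p)

namespace ENNReal

lemma rpow_iSup {ι : Sort*} (c : ι → ℝ≥0∞) {r : ℝ} (hr : 0 < r) :
    (⨆ i, c i) ^ r = ⨆ i, c i ^ r :=
  (monotone_rpow_of_nonneg hr.le).map_iSup_of_continuousAt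
    continuous_rpow_const.continuousAt (zero_rpow_of_pos hr)

lemma iSup_min_natCast (a : ℝ≥0∞) : ⨆ n : ℕ, min a n = a := by
  rw [← inf_iSup_eq, iSup_natCast, inf_top_eq]

lemma rpow_one_div_le_of_le_mul_rpow {A B : ℝ≥0∞} {r r' : ℝ} (hrr' : r.HolderConjugate r')
    (hB : B ≠ ⊤) (h : B ≤ A * B ^ (1 / r')) : B ^ (1 / r) ≤ A := by
  rcases eq_or_ne B 0 with rfl | hB0
  · rw [zero_rpow_of_pos hrr'.one_div_pos]
    exact zero_le
  have hsplit : B = B ^ (1 / r) * B ^ (1 / r') := by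
    rw [← rpow_add_of_nonneg _ _ hrr'.one_div_nonneg hrr'.symm.one_div_nonneg,
      hrr'.one_div_add_one_div, div_one, rpow_one]
  nth_rewrite 1 [hsplit] at h
  exact (ENNReal.mul_le_mul_iff_left (rpow_pos (pos_iff_ne_zero.2 hB0) hB).ne'
    (rpow_ne_top_of_nonneg hrr'.symm.one_div_nonneg hB)).1 h

end ENNReal

section Minkowski

variable {α β : Type*} [MeasurableSpace α] [MeasurableSpace β] {μ : Measure α} {ν : Measure β}

lemma lintegral_rpow_le_mul_rpow_of_le_lintegral [SFinite μ] [SFinite ν] {r r' : ℝ}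
    (hrr' : r.HolderConjugate r') {f : α → β → ℝ≥0∞} (hf : Measurable (Function.uncurry f))
    {g : β → ℝ≥0∞} (hg : Measurable g) (hgf : ∀ y, g y ≤ ∫⁻ x, f x y ∂μ) :
    ∫⁻ y, g y ^ r ∂ν ≤
      (∫⁻ x, (∫⁻ y, f x y ^ r ∂ν) ^ (1 / r) ∂μ) * (∫⁻ y, g y ^ r ∂ν) ^ (1 / r') := by
  have hg_pow : ∀ y, g y ^ r = g y * g y ^ (r - 1) := fun y => by
    have h := rpow_add_of_nonneg (x := g y) 1 (r - 1) zero_le_one hrr'.sub_one_pos.le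
    rwa [add_sub_cancel, rpow_one] at h
  have hg_conj : ∀ y, (g y ^ (r - 1)) ^ r' = g y ^ r := fun y => by
    rw [← rpow_mul, hrr'.sub_one_mul_conj]
  have hg' : Measurable fun y => g y ^ (r - 1) := hg.pow_const _
  calc ∫⁻ y, g y ^ r ∂ν
      = ∫⁻ y, g y * g y ^ (r - 1) ∂ν := lintegral_congr hg_pow
    _ ≤ ∫⁻ y, (∫⁻ x, f x y ∂μ) * g y ^ (r - 1) ∂ν := by gcongr with y; exact hgf y
    _ = ∫⁻ y, ∫⁻ x, f x y * g y ^ (r - 1) ∂μ ∂ν := by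
        refine lintegral_congr fun y => (lintegral_mul_const _ ?_).symm
        exact hf.comp measurable_prodMk_right
    _ = ∫⁻ x, ∫⁻ y, f x y * g y ^ (r - 1) ∂ν ∂μ :=
        (lintegral_lintegral_swap (hf.mul (hg'.comp measurable_snd)).aemeasurable).symm
    _ ≤ ∫⁻ x, (∫⁻ y, f x y ^ r ∂ν) ^ (1 / r) * (∫⁻ y, (g y ^ (r - 1)) ^ r' ∂ν) ^ (1 / r') ∂μ := by
        gcongr with x
        exact lintegral_mul_le_Lp_mul_Lq ν hrr' (hf.comp measurable_prodMk_left).aemeasurable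
          hg'.aemeasurable
    _ = _ := by
        simp_rw [hg_conj]
        refine lintegral_mul_const _ (Measurable.pow_const ?_ _)
        exact (hf.pow_const r).lintegral_prod_right'

theorem lintegral_rpow_lintegral_le [SFinite μ] [IsFiniteMeasure ν] {r : ℝ} (hr : 1 ≤ r)
    {f : α → β → ℝ≥0∞} (hf : Measurable (Function.uncurry f)) :
    (∫⁻ y, (∫⁻ x, f x y ∂μ) ^ r ∂ν) ^ (1 / r) ≤ ∫⁻ x, (∫⁻ y, f x y ^ r ∂ν) ^ (1 / r) ∂μ := by
  rcases hr.eq_or_lt with rfl | hr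
  · simpa using (lintegral_lintegral_swap hf.aemeasurable).ge
  have hr0 : 0 < r := zero_lt_one.trans hr
  set F : β → ℝ≥0∞ := fun y => ∫⁻ x, f x y ∂μ
  have hF : Measurable F := hf.lintegral_prod_left
  have hmono : Monotone fun (n : ℕ) y => min (F y) n ^ r := fun i j hij y =>
    rpow_le_rpow (min_le_min_left _ (Nat.cast_le.2 hij)) hr0.le
  -- Truncating `F` at height `n` makes `B := ∫ min F n ^ r` finite, so that the Hölder bound
  -- `B ≤ A * B ^ (1 / r')` can be solved for `B ^ (1 / r)`.
  have htrunc (n : ℕ) : (∫⁻ y, min (F y) n ^ r ∂ν) ^ (1 / r) ≤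
      ∫⁻ x, (∫⁻ y, f x y ^ r ∂ν) ^ (1 / r) ∂μ := by
    have hfin : ∫⁻ y, min (F y) n ^ r ∂ν ≠ ⊤ := by
      refine ne_top_of_le_ne_top ?_ (lintegral_mono fun y => rpow_le_rpow (min_le_right _ _) hr0.le)
      rw [lintegral_const]
      exact mul_ne_top (rpow_ne_top_of_nonneg hr0.le (natCast_ne_top n)) (measure_ne_top ν univ)
    exact rpow_one_div_le_of_le_mul_rpow (.conjExponent hr) hfin
      (lintegral_rpow_le_mul_rpow_of_le_lintegral (.conjExponent hr) hf (hF.min measurable_const)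
        fun y => min_le_left _ _)
  calc (∫⁻ y, F y ^ r ∂ν) ^ (1 / r)
      = (∫⁻ y, ⨆ n : ℕ, min (F y) n ^ r ∂ν) ^ (1 / r) := by
        simp_rw [← rpow_iSup _ hr0, iSup_min_natCast]
    _ = ⨆ n : ℕ, (∫⁻ y, min (F y) n ^ r ∂ν) ^ (1 / r) := by
        rw [lintegral_iSup (fun n => (hF.min measurable_const).pow_const r) hmono,
          rpow_iSup _ (by positivity)]
    _ ≤ _ := iSup_le htrunc

end Minkowski

section MixedNorm

variable {α β γ : Type*} [MeasurableSpace α] [MeasurableSpace β] [MeasurableSpace γ]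
  {μ : Measure α} {P : Measure β} {p q : ℝ}

def mixedLpNorm (μ : Measure α) (P : Measure β) (p q : ℝ) (g : α → β → ℝ≥0∞) : ℝ≥0∞ :=
  (∫⁻ ω, (∫⁻ s, g s ω ^ q ∂μ) ^ (p / q) ∂P) ^ (1 / p)

lemma mixedLpNorm_eq (g : α → β → ℝ≥0∞) :
    mixedLpNorm μ P p q g = (∫⁻ ω, ((∫⁻ s, g s ω ^ q ∂μ) ^ (1 / q)) ^ p ∂P) ^ (1 / p) := by
  simp_rw [mixedLpNorm, ← rpow_mul, one_div_mul_eq_div]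

lemma mixedLpNorm_mono (hp : 0 ≤ p) (hq : 0 ≤ q) {g h : α → β → ℝ≥0∞}
    (hgh : ∀ ω, ∀ᵐ s ∂μ, g s ω ≤ h s ω) : mixedLpNorm μ P p q g ≤ mixedLpNorm μ P p q h := by
  refine rpow_le_rpow (lintegral_mono fun ω => rpow_le_rpow ?_ (div_nonneg hp hq)) (by positivity)
  exact lintegral_mono_ae ((hgh ω).mono fun s hs => rpow_le_rpow hs hq)

lemma mixedLpNorm_add_le [SFinite μ] (hp : 1 ≤ p) (hq : 1 ≤ q) {g h : α → β → ℝ≥0∞}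
    (hg : Measurable (Function.uncurry g)) (hh : Measurable (Function.uncurry h)) :
    mixedLpNorm μ P p q (fun s ω => g s ω + h s ω) ≤
      mixedLpNorm μ P p q g + mixedLpNorm μ P p q h := by
  simp_rw [mixedLpNorm_eq]
  calc _ ≤ (∫⁻ ω, ((∫⁻ s, g s ω ^ q ∂μ) ^ (1 / q) + (∫⁻ s, h s ω ^ q ∂μ) ^ (1 / q)) ^ p ∂P)
        ^ (1 / p) := by
        gcongr with ω
        exact lintegral_Lp_add_le (hg.comp measurable_prodMk_right).aemeasurable
          (hh.comp measurable_prodMk_right).aemeasurable hq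
    _ ≤ _ := lintegral_Lp_add_le
        ((hg.pow_const q).lintegral_prod_left.pow_const _).aemeasurable
        ((hh.pow_const q).lintegral_prod_left.pow_const _).aemeasurable hp

lemma mixedLpNorm_lintegral_le {ρ : Measure γ} [SFinite ρ] [IsFiniteMeasure μ]
    [IsFiniteMeasure P] (hp : 1 ≤ p) (hq : 1 ≤ q) {k : γ → α → β → ℝ≥0∞}
    (hk : Measurable fun x : γ × α × β => k x.1 x.2.1 x.2.2) :
    mixedLpNorm μ P p q (fun s ω => ∫⁻ τ, k τ s ω ∂ρ) ≤ ∫⁻ τ, mixedLpNorm μ P p q (k τ) ∂ρ := by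
  simp_rw [mixedLpNorm_eq]
  calc _ ≤ (∫⁻ ω, (∫⁻ τ, (∫⁻ s, k τ s ω ^ q ∂μ) ^ (1 / q) ∂ρ) ^ p ∂P) ^ (1 / p) := by
        gcongr with ω
        exact lintegral_rpow_lintegral_le hq
          (hk.comp (f := fun x : γ × α => (x.1, x.2, ω)) (by fun_prop))
    _ ≤ _ := by
        refine lintegral_rpow_lintegral_le hp (f := fun τ ω => (∫⁻ s, k τ s ω ^ q ∂μ) ^ (1 / q)) ?_
        have hkq : Measurable fun x : (γ × β) × α => k x.1.1 x.2 x.1.2 ^ q :=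
          (hk.pow_const q).comp (f := fun x : (γ × β) × α => (x.1.1, x.2, x.1.2)) (by fun_prop)
        exact hkq.lintegral_prod_right'.pow_const _

end MixedNorm

lemma enorm_intervalIntegral_le_setLIntegral_Icc {E : Type*} [NormedAddCommGroup E]
    [NormedSpace ℝ E] {a b s : ℝ} (hs : s ∈ Icc a b) (φ : ℝ → E) :
    ‖∫ τ in a..s, φ τ‖ₑ ≤ ∫⁻ τ in Icc a b, ‖φ τ‖ₑ := by
  rw [intervalIntegral.integral_of_le hs.1]
  exact (enorm_integral_le_lintegral_enorm _).trans
    (lintegral_mono_set fun τ hτ => ⟨hτ.1.le, hτ.2.trans hs.2⟩)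

theorem stmt6_general {Ω : Type*} {mΩ : MeasurableSpace Ω} (P : Measure Ω) [IsProbabilityMeasure P]
    {n : ℕ} (S T p q : ℝ) (hp : 1 ≤ p) (hq : 1 ≤ q)
    (Z dZ : ℝ → ℝ → Ω → EuclideanSpace ℝ (Fin n))
    (hZmeas : Measurable (fun x : (ℝ × ℝ) × Ω => Z x.1.1 x.1.2 x.2))
    (hdZmeas : Measurable (fun x : (ℝ × ℝ) × Ω => dZ x.1.1 x.1.2 x.2))
    -- `M` is a bound for the norms of the derivative:
    (M : ℝ≥0∞) (hM : ∀ τ ∈ Icc S T, LpqNorm P S T p q (dZ τ) ≤ M)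
    (Diag : ℝ → Ω → EuclideanSpace ℝ (Fin n))
    (hDiag : ∀ s ω, Diag s ω = Z S s ω + ∫ τ in S..s, dZ τ s ω) :
    LpqNorm P S T p q Diag ≤ LpqNorm P S T p q (Z S) + ENNReal.ofReal (T - S) * M := by
  set μ := volume.restrict (Icc S T)
  have hZS : Measurable fun x : ℝ × Ω => ENNReal.ofReal ‖Z S x.1 x.2‖ :=
    (hZmeas.comp (f := fun x : ℝ × Ω => ((S, x.1), x.2)) (by fun_prop)).norm.ennreal_ofReal
  have hdZ : Measurable fun x : ℝ × ℝ × Ω => ENNReal.ofReal ‖dZ x.1 x.2.1 x.2.2‖ :=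
    (hdZmeas.comp (f := fun x : ℝ × ℝ × Ω => ((x.1, x.2.1), x.2.2))
      (by fun_prop)).norm.ennreal_ofReal
  have hDiag_le (ω : Ω) : ∀ᵐ s ∂μ, ENNReal.ofReal ‖Diag s ω‖ ≤
      ENNReal.ofReal ‖Z S s ω‖ + ∫⁻ τ in Icc S T, ENNReal.ofReal ‖dZ τ s ω‖ := by
    refine ae_restrict_of_forall_mem measurableSet_Icc fun s hs => ?_
    simp only [ofReal_norm, hDiag]
    exact (enorm_add_le _ _).trans
      (add_le_add_right (enorm_intervalIntegral_le_setLIntegral_Icc hs _) _)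
  calc LpqNorm P S T p q Diag
      ≤ mixedLpNorm μ P p q fun s ω =>
          ENNReal.ofReal ‖Z S s ω‖ + ∫⁻ τ in Icc S T, ENNReal.ofReal ‖dZ τ s ω‖ :=
        mixedLpNorm_mono (by positivity) (by positivity) hDiag_le
    _ ≤ LpqNorm P S T p q (Z S) +
          mixedLpNorm μ P p q fun s ω => ∫⁻ τ in Icc S T, ENNReal.ofReal ‖dZ τ s ω‖ :=
        mixedLpNorm_add_le hp hq hZS hdZ.lintegral_prod_left
    _ ≤ LpqNorm P S T p q (Z S) + ∫⁻ τ in Icc S T, LpqNorm P S T p q (dZ τ) :=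
        add_le_add_right (mixedLpNorm_lintegral_le hp hq hdZ) _
    _ ≤ LpqNorm P S T p q (Z S) + ∫⁻ _ in Icc S T, M :=
        add_le_add_right (setLIntegral_mono' measurableSet_Icc hM) _
    _ = LpqNorm P S T p q (Z S) + ENNReal.ofReal (T - S) * M := by
        rw [setLIntegral_const, Real.volume_Icc, mul_comm]

/-- Lemma 2.6 (i) of the paper: if `t ↦ Z(t,·)` is continuously differentiable from `[S,T]`
into `L^{p,q}_F(S,T;H)` with derivative `∂_t Z`, then the diagonal process
`Diag[Z](s) = Z(S,s) + ∫_S^s ∂_t Z(τ,s) dτ` belongs to `L^{p,q}_F(S,T;H)` with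
`‖Diag[Z]‖ ≤ ‖Z(S,·)‖ + (T−S)·sup_t ‖∂_t Z(t,·)‖`. -/
theorem stmt6 {Ω : Type*} {mΩ : MeasurableSpace Ω} (P : Measure Ω) [IsProbabilityMeasure P]
    (F : MeasureTheory.Filtration ℝ mΩ)
    {n : ℕ} (S T p q : ℝ) (hS : 0 ≤ S) (hST : S < T) (hp : 1 ≤ p) (hq : 1 ≤ q)
    (Z dZ : ℝ → ℝ → Ω → EuclideanSpace ℝ (Fin n))
    (hZmeas : Measurable (fun x : (ℝ × ℝ) × Ω => Z x.1.1 x.1.2 x.2))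
    (hdZmeas : Measurable (fun x : (ℝ × ℝ) × Ω => dZ x.1.1 x.1.2 x.2))
    (hZprog : ∀ t, ProgMeasurable F (Z t))
    (hdZprog : ∀ τ, ProgMeasurable F (dZ τ))
    (hZint : ∀ t ∈ Icc S T, LpqNorm P S T p q (Z t) < ⊤)
    (hdZint : ∀ τ ∈ Icc S T, LpqNorm P S T p q (dZ τ) < ⊤)
    -- `t ↦ Z(t,·)` has derivative `dZ` in the Banach space `L^{p,q}` (fundamental theorem
    -- of calculus form):
    (hFTC : ∀ t₁ ∈ Icc S T, ∀ t₂ ∈ Icc S T,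
      ∀ᵐ x ∂((volume.restrict (Icc S T)).prod P),
        Z t₁ x.1 x.2 - Z t₂ x.1 x.2 = ∫ τ in t₂..t₁, dZ τ x.1 x.2)
    -- the derivative is continuous in `t` as an `L^{p,q}`-valued map:
    (hdZcont : ∀ τ₀ ∈ Icc S T,
      Tendsto (fun τ => LpqNorm P S T p q (fun s ω => dZ τ s ω - dZ τ₀ s ω))
        (𝓝[Icc S T] τ₀) (𝓝 0))
    -- `M` is a bound for the norms of the derivative:
    (M : ℝ≥0∞) (hM : ∀ τ ∈ Icc S T, LpqNorm P S T p q (dZ τ) ≤ M)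
    (Diag : ℝ → Ω → EuclideanSpace ℝ (Fin n))
    (hDiag : ∀ s ω, Diag s ω = Z S s ω + ∫ τ in S..s, dZ τ s ω) :
    LpqNorm P S T p q Diag ≤ LpqNorm P S T p q (Z S) + ENNReal.ofReal (T - S) * M :=
  stmt6_general (mΩ := mΩ) P S T p q hp hq Z dZ hZmeas hdZmeas M hM Diag hDiag
end
end
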